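/- arXiv:math/0103170 — 2 statements merged into one kernel-verified Lean document; each statement's English description precedes it below -/
import Mathlib

section
/- The Motzkin polynomial m(x,y) = x⁴y² + x²y⁴ - 3x²y² satisfies m(x,y) ≥ -1 for all real x, y. -/
/-!
With `t = |x y|` we have `m(x, y) = t² (x² + y²) - 3 t²`, and `x² + y² ≥ 2 t` (AM–GM), so
`m(x, y) + 1 ≥ 2 t³ - 3 t² + 1 = (t - 1)² (2 t + 1) ≥ 0`. Equality holds at `|x| = |y| = 1`.
-/

lemma two_mul_abs_mul_le_sq_add_sq {R : Type*} [CommRing R] [LinearOrder R] [IsStrictOrderedRing R]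
    (x y : R) : 2 * |x * y| ≤ x ^ 2 + y ^ 2 := by
  simpa only [abs_mul, mul_assoc, sq_abs] using two_mul_le_add_sq |x| |y|

lemma two_mul_cube_sub_three_mul_sq_add_one_nonneg {R : Type*} [CommRing R] [LinearOrder R]
    [IsStrictOrderedRing R] {t : R} (ht : 0 ≤ 2 * t + 1) : 0 ≤ 2 * t ^ 3 - 3 * t ^ 2 + 1 := by
  have factor : 2 * t ^ 3 - 3 * t ^ 2 + 1 = (t - 1) ^ 2 * (2 * t + 1) := by ring
  rw [factor]
  exact mul_nonneg (sq_nonneg _) ht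

/-- The Motzkin polynomial `m(x,y) = x⁴y² + x²y⁴ - 3x²y²` satisfies `m(x,y) ≥ -1`. -/
theorem motzkin_ge_neg_one (x y : ℝ) :
    x ^ 4 * y ^ 2 + x ^ 2 * y ^ 4 - 3 * x ^ 2 * y ^ 2 ≥ -1 := by
  set t := |x * y| with ht
  have ht_nonneg : 0 ≤ t := abs_nonneg _
  have cubic := two_mul_cube_sub_three_mul_sq_add_one_nonneg (t := t) (by linarith)
  calc x ^ 4 * y ^ 2 + x ^ 2 * y ^ 4 - 3 * x ^ 2 * y ^ 2
      = t ^ 2 * (x ^ 2 + y ^ 2) - 3 * t ^ 2 := by rw [ht, sq_abs]; ring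
    _ ≥ t ^ 2 * (2 * t) - 3 * t ^ 2 := by gcongr; exact two_mul_abs_mul_le_sq_add_sq x y
    _ ≥ -1 := by linarith
end

section
/- For every real number λ, the polynomial m(x,y) - λ, where m(x,y) = x⁴y² + x²y⁴ - 3x²y² is the Motzkin polynomial, is not a sum of squares of polynomials in ℝ[x,y]. -/
/-!
Read `m - λ` in `ℝ[y][x]` as `y² x⁴ + (y⁴ - 3y²) x² - λ`. Since `ℝ[y]` is formally real, the
leading coefficients of the `hᵢ` in an identity `m - λ = ∑ hᵢ²` cannot cancel, so
`hᵢ = aᵢ + bᵢ x + cᵢ x²`. Comparing the coefficients of `x⁰`, `x⁴`, `x²` gives `∑ aᵢ² = -λ`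
(so the `aᵢ` are constants), `∑ cᵢ² = y²` (so `cᵢ(0) = 0`) and `∑ (bᵢ² + 2 aᵢ cᵢ) = y⁴ - 3y²`.
At `y = 0` the last identity forces `bᵢ(0) = 0`, and then its `y²`-coefficient reads
`∑ bᵢ'(0)² = -3`, which is absurd.
-/

open MvPolynomial

def IsSOS {σ : Type*} (p : MvPolynomial σ ℝ) : Prop :=
  ∃ (k : ℕ) (h : Fin k → MvPolynomial σ ℝ), p = ∑ i, (h i) ^ 2

theorem IsFormallyReal.eq_zero_of_sum_sq_eq_zero {R ι : Type*} [CommRing R] [IsFormallyReal R]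
    {s : Finset ι} {f : ι → R} (h : ∑ i ∈ s, f i ^ 2 = 0) {i : ι} (hi : i ∈ s) : f i = 0 := by
  classical
  rw [← Finset.add_sum_erase s _ hi] at h
  have hsq : f i ^ 2 = 0 :=
    eq_zero_of_add_right (IsSquare.isSumSq (.sq _)) (IsSumSq.sum_sq _ _) h
  exact IsNilpotent.eq_zero ⟨2, hsq⟩

theorem IsSumSq.eval_nonneg {R : Type*} [CommRing R] [LinearOrder R] [IsStrictOrderedRing R]
    {p : Polynomial R} (hp : IsSumSq p) (x : R) : 0 ≤ p.eval x := by
  induction hp using IsSumSq.rec' with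
  | zero => simp
  | sq_add hx _ ih =>
    obtain ⟨a, rfl⟩ := hx
    rw [Polynomial.eval_add, Polynomial.eval_mul]
    exact add_nonneg (mul_self_nonneg _) ih

namespace Polynomial

instance isFormallyReal {R : Type*} [CommRing R] [LinearOrder R] [IsStrictOrderedRing R] :
    IsFormallyReal R[X] :=
  IsFormallyReal.of_eq_zero_of_mul_self_of_eq_zero_of_add mul_self_eq_zero.mp
    fun hs₁ hs₂ h ↦ Polynomial.funext fun x ↦ by
      have := congrArg (eval x) h
      rw [eval_add, eval_zero] at this
      simpa using le_antisymm (by linarith [hs₂.eval_nonneg x]) (hs₁.eval_nonneg x)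

theorem natDegree_le_of_natDegree_sum_sq_le {R ι : Type*} [CommRing R] [IsFormallyReal R]
    {s : Finset ι} {f : ι → R[X]} {n : ℕ} (h : (∑ i ∈ s, f i ^ 2).natDegree ≤ 2 * n)
    {i : ι} (hi : i ∈ s) : (f i).natDegree ≤ n := by
  obtain ⟨j, hj, hjd⟩ := Finset.exists_mem_eq_sup s ⟨i, hi⟩ fun i ↦ (f i).natDegree
  have hle : ∀ i ∈ s, (f i).natDegree ≤ (f j).natDegree := fun i hi ↦
    hjd ▸ Finset.le_sup (f := fun i ↦ (f i).natDegree) hi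
  by_contra! hn
  have hfj : f j ≠ 0 := by
    rintro h0
    have := hle i hi
    rw [h0, natDegree_zero] at this
    omega
  have hcoeff : ∑ i ∈ s, (f i).coeff (f j).natDegree ^ 2 = 0 := by
    have : (∑ i ∈ s, f i ^ 2).coeff (2 * (f j).natDegree) = 0 :=
      coeff_eq_zero_of_natDegree_lt (by have := hle i hi; omega)
    rwa [finsetSum_coeff, Finset.sum_congr rfl fun i hi ↦ coeff_pow_of_natDegree_le (hle i hi)]
      at this
  exact hfj (leadingCoeff_eq_zero.mp (IsFormallyReal.eq_zero_of_sum_sq_eq_zero hcoeff hj))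

theorem coeff_sq_two {R : Type*} [CommSemiring R] (p : R[X]) :
    (p ^ 2).coeff 2 = p.coeff 1 ^ 2 + 2 * (p.coeff 0 * p.coeff 2) := by
  rw [sq, coeff_mul, Finset.Nat.sum_antidiagonal_eq_sum_range_succ_mk]
  simp only [Finset.sum_range_succ, Finset.sum_range_zero]
  ring

theorem sum_sq_add_two_mul_ne {R ι : Type*} [CommRing R] [LinearOrder R] [IsStrictOrderedRing R]
    {s : Finset ι} {a b c : ι → R[X]} {r : R} {p : R[X]}
    (ha : ∑ i ∈ s, a i ^ 2 = C r) (hc : ∑ i ∈ s, c i ^ 2 = X ^ 2)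
    (hp₀ : p.coeff 0 = 0) (hp₂ : p.coeff 2 < 0) :
    ∑ i ∈ s, (b i ^ 2 + 2 * (a i * c i)) ≠ p := by
  intro hb
  have ha_deg (i) (hi : i ∈ s) : (a i).natDegree ≤ 0 :=
    natDegree_le_of_natDegree_sum_sq_le (by simp [ha]) hi
  have hc_deg (i) (hi : i ∈ s) : (c i).natDegree ≤ 1 :=
    natDegree_le_of_natDegree_sum_sq_le (by simp [hc]) hi
  have hc₀ (i) (hi : i ∈ s) : (c i).coeff 0 = 0 := by
    refine IsFormallyReal.eq_zero_of_sum_sq_eq_zero (f := fun i ↦ (c i).coeff 0) ?_ hi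
    simpa [coeff_zero_eq_eval_zero, eval_finsetSum] using congrArg (eval 0) hc
  have hb₀ (i) (hi : i ∈ s) : (b i).coeff 0 = 0 := by
    refine IsFormallyReal.eq_zero_of_sum_sq_eq_zero (f := fun i ↦ (b i).coeff 0) ?_ hi
    have := congrArg (eval 0) hb
    simp only [eval_finsetSum, eval_add, eval_mul, eval_pow, ← coeff_zero_eq_eval_zero, hp₀] at this
    rwa [Finset.sum_congr rfl fun i hi ↦ by rw [hc₀ i hi, mul_zero, mul_zero, add_zero]] at this
  have hb₂ : ∑ i ∈ s, (b i).coeff 1 ^ 2 = p.coeff 2 := by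
    rw [← hb, finsetSum_coeff]
    refine Finset.sum_congr rfl fun i hi ↦ ?_
    have hac : (a i * c i).coeff 2 = 0 :=
      coeff_eq_zero_of_natDegree_lt <|
        (natDegree_mul_le_of_le (ha_deg i hi) (hc_deg i hi)).trans_lt (by norm_num)
    rw [coeff_add, coeff_sq_two, hb₀ i hi, ← C_ofNat, coeff_C_mul, hac]
    ring
  exact (Finset.sum_nonneg fun i _ ↦ sq_nonneg _).not_gt (hb₂ ▸ hp₂)

theorem sum_sq_ne_motzkin_sub_C {R ι : Type*} [CommRing R] [LinearOrder R] [IsStrictOrderedRing R]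
    (s : Finset ι) (H : ι → R[X][X]) (r : R) :
    ∑ i ∈ s, H i ^ 2 ≠ X ^ 4 * C X ^ 2 + X ^ 2 * C X ^ 4 - 3 * X ^ 2 * C X ^ 2 - C (C r) := by
  intro h
  have hQ : ∑ i ∈ s, H i ^ 2 =
      C (X ^ 2) * X ^ 4 + C (X ^ 4 - 3 * X ^ 2) * X ^ 2 + C (C (-r)) := by
    rw [h]
    simp only [map_sub, map_pow, map_mul, map_neg, map_ofNat]
    ring
  have hdeg (i) (hi : i ∈ s) : (H i).natDegree ≤ 2 :=
    natDegree_le_of_natDegree_sum_sq_le (by rw [hQ]; compute_degree) hi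
  have hcoeff (n : ℕ) := congrArg (coeff · n) hQ
  simp only [finsetSum_coeff, coeff_add, coeff_C_mul_X_pow, coeff_C] at hcoeff
  have h₀ : ∑ i ∈ s, (H i).coeff 0 ^ 2 = C (-r) := by
    simpa [sq, mul_coeff_zero] using hcoeff 0
  have h₄ : ∑ i ∈ s, (H i).coeff 2 ^ 2 = X ^ 2 := by
    rw [← (by simpa using hcoeff 4 : ∑ i ∈ s, (H i ^ 2).coeff (2 * 2) = X ^ 2)]
    exact Finset.sum_congr rfl fun i hi ↦ (coeff_pow_of_natDegree_le (hdeg i hi)).symm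
  have h₂ : ∑ i ∈ s, ((H i).coeff 1 ^ 2 + 2 * ((H i).coeff 0 * (H i).coeff 2)) =
      X ^ 4 - 3 * X ^ 2 := by
    simpa [coeff_sq_two] using hcoeff 2
  exact sum_sq_add_two_mul_ne h₀ h₄ (by simp) (by simp) h₂

end Polynomial

/-- For every real `λ`, `m(x,y) - λ` is not a sum of squares in `ℝ[x,y]`,
where `m` is the Motzkin polynomial. -/
theorem motzkin_not_sos (lam : ℝ) :
    ¬ IsSOS ((X 0 ^ 4 * X 1 ^ 2 + X 0 ^ 2 * X 1 ^ 4 - 3 * X 0 ^ 2 * X 1 ^ 2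
      - C lam : MvPolynomial (Fin 2) ℝ)) := by
  rintro ⟨k, h, hP⟩
  have hφ := congrArg (aeval ![(Polynomial.X : Polynomial (Polynomial ℝ)),
    Polynomial.C Polynomial.X]) hP
  simp only [map_sub, map_add, map_mul, map_pow, aeval_X, Matrix.cons_val_zero,
    Matrix.cons_val_one, aeval_ofNat, algHom_C, Polynomial.algebraMap_apply,
    Polynomial.algebraMap_eq, map_sum] at hφ
  exact Polynomial.sum_sq_ne_motzkin_sub_C Finset.univ _ lam hφ.symm
end
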